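/- arXiv:math/0608332 — 4 statements merged into one kernel-verified Lean document; each statement's English description precedes it below -/
import Mathlib

section
/- Let E be a normed vector space and let f : ℝⁿ → E be a twice continuously differentiable function such that f(ξ) → 0 as ‖ξ‖ → ∞ and such that there exist constants C, R > 0 with ‖f''(ξ)‖ ≤ C·‖ξ‖⁻² for all ξ with ‖ξ‖ ≥ R (here f'' denotes the second Fréchet derivative). Then for every fixed nonzero vector v ∈ ℝⁿ, the function r ↦ r·‖f'(r·v)‖ (for r > 0) tends to 0 both as r → 0⁺ and as r → +∞, where f' denotes the Fréchet derivative of f. -/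
open Filter Metric

lemma norm_fderiv_fderiv_le {F E : Type*} [NormedAddCommGroup F] [NormedSpace ℝ F]
    [NormedAddCommGroup E] [NormedSpace ℝ E] (f : F → E) (x : F) :
    ‖fderiv ℝ (fderiv ℝ f) x‖ ≤ ‖iteratedFDeriv ℝ 2 f x‖ := by
  refine ContinuousLinearMap.opNorm_le_bound (fderiv ℝ (fderiv ℝ f) x)
    (norm_nonneg _) fun u => ?_
  refine ContinuousLinearMap.opNorm_le_bound (fderiv ℝ (fderiv ℝ f) x u)
    (mul_nonneg (norm_nonneg _) (norm_nonneg _)) fun w => ?_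
  have h := iteratedFDeriv_two_apply (𝕜 := ℝ) f x ![u, w]
  simp only [Matrix.cons_val_zero, Matrix.cons_val_one, Matrix.head_cons] at h
  calc ‖fderiv ℝ (fderiv ℝ f) x u w‖ = ‖iteratedFDeriv ℝ 2 f x ![u, w]‖ := by rw [h]
    _ ≤ ‖iteratedFDeriv ℝ 2 f x‖ * ∏ i, ‖![u, w] i‖ :=
        (iteratedFDeriv ℝ 2 f x).le_opNorm _
    _ = ‖iteratedFDeriv ℝ 2 f x‖ * ‖u‖ * ‖w‖ := by
        simp [Fin.prod_univ_two]; ring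

lemma key_est {F E : Type*} [NormedAddCommGroup F] [NormedSpace ℝ F]
    [NormedAddCommGroup E] [NormedSpace ℝ E]
    (f : F → E) (hf : ContDiff ℝ 2 f) {M η h : ℝ} (hM : 0 ≤ M) (hη : 0 ≤ η) (hh : 0 < h)
    (ξ : F)
    (hball : ∀ x ∈ Metric.closedBall ξ h, ‖fderiv ℝ (fderiv ℝ f) x‖ ≤ M)
    (hsmall : ∀ x ∈ Metric.closedBall ξ h, ‖f x‖ ≤ η) :
    ‖fderiv ℝ f ξ‖ ≤ (2 * η + M * h ^ 2) / h := by
  have hdf : ContDiff ℝ 1 (fderiv ℝ f) := hf.fderiv_right (by norm_num)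
  have hdiff : Differentiable ℝ f := hf.differentiable (by norm_num)
  have hconv : Convex ℝ (Metric.closedBall ξ h) := convex_closedBall ξ h
  have hξmem : ξ ∈ Metric.closedBall ξ h := Metric.mem_closedBall_self hh.le
  -- Step 1: Lipschitz bound on fderiv f over the ball
  have step1 : ∀ x ∈ Metric.closedBall ξ h, ‖fderiv ℝ f x - fderiv ℝ f ξ‖ ≤ M * h := by
    intro x hx
    have := hconv.norm_image_sub_le_of_norm_fderiv_le
      (fun y _ => (hdf.differentiable one_ne_zero).differentiableAt) hball hξmem hx
    calc ‖fderiv ℝ f x - fderiv ℝ f ξ‖ ≤ M * ‖x - ξ‖ := this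
      _ ≤ M * h := by
          have := Metric.mem_closedBall.mp hx
          rw [dist_eq_norm] at this
          exact mul_le_mul_of_nonneg_left this hM
  -- Step 2: Taylor estimate
  have step2 : ∀ w : F, ‖w‖ = h →
      ‖f (ξ + w) - f ξ - fderiv ℝ f ξ w‖ ≤ M * h * h := by
    intro w hw
    set g : F → E := fun x => f x - fderiv ℝ f ξ x with hg
    have hgd : ∀ x ∈ Metric.closedBall ξ h,
        HasFDerivWithinAt g (fderiv ℝ f x - fderiv ℝ f ξ) (Metric.closedBall ξ h) x := by
      intro x _
      exact (((hdiff x).hasFDerivAt.sub (fderiv ℝ f ξ).hasFDerivAt)).hasFDerivWithinAt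
    have hwmem : ξ + w ∈ Metric.closedBall ξ h := by
      simp [Metric.mem_closedBall, dist_eq_norm, hw]
    have := hconv.norm_image_sub_le_of_norm_hasFDerivWithin_le hgd step1 hξmem hwmem
    have heq : g (ξ + w) - g ξ = f (ξ + w) - f ξ - fderiv ℝ f ξ w := by
      simp only [hg, map_add]
      abel
    rw [heq] at this
    calc ‖f (ξ + w) - f ξ - fderiv ℝ f ξ w‖ ≤ M * h * ‖ξ + w - ξ‖ := this
      _ = M * h * h := by rw [add_sub_cancel_left, hw]
  -- Conclude with operator norm bound
  apply ContinuousLinearMap.opNorm_le_bound _ (by positivity)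
  intro u
  rcases eq_or_ne u 0 with rfl | hu
  · simp
  · have hun : 0 < ‖u‖ := norm_pos_iff.mpr hu
    set w : F := (h / ‖u‖) • u with hwdef
    have hwn : ‖w‖ = h := by
      rw [hwdef, norm_smul, Real.norm_eq_abs, abs_of_pos (by positivity)]
      field_simp
    have hwmem : ξ + w ∈ Metric.closedBall ξ h := by
      simp [Metric.mem_closedBall, dist_eq_norm, hwn]
    have hbw : ‖fderiv ℝ f ξ w‖ ≤ 2 * η + M * h ^ 2 := by
      have h1 := step2 w hwn
      have h2 : ‖fderiv ℝ f ξ w‖ ≤ ‖f (ξ + w)‖ + ‖f ξ‖ + ‖f (ξ + w) - f ξ - fderiv ℝ f ξ w‖ := by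
        have heq : fderiv ℝ f ξ w = (f (ξ + w) - f ξ) - (f (ξ + w) - f ξ - fderiv ℝ f ξ w) := by
          abel
        calc ‖fderiv ℝ f ξ w‖
            = ‖(f (ξ + w) - f ξ) - (f (ξ + w) - f ξ - fderiv ℝ f ξ w)‖ := congrArg norm heq
          _ ≤ ‖f (ξ + w) - f ξ‖ + ‖f (ξ + w) - f ξ - fderiv ℝ f ξ w‖ := norm_sub_le _ _
          _ ≤ ‖f (ξ + w)‖ + ‖f ξ‖ + ‖f (ξ + w) - f ξ - fderiv ℝ f ξ w‖ := by
              gcongr; exact norm_sub_le _ _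
      have h3 := hsmall _ hwmem
      have h4 := hsmall _ hξmem
      nlinarith [h1, h2, h3, h4]
    have hrel : fderiv ℝ f ξ u = (‖u‖ / h) • fderiv ℝ f ξ w := by
      rw [hwdef, map_smul]
      rw [smul_smul]
      rw [div_mul_div_comm]
      rw [mul_comm ‖u‖ h, mul_comm h ‖u‖]
      rw [div_self (by positivity), one_smul]
    rw [hrel, norm_smul, Real.norm_eq_abs, abs_of_pos (by positivity)]
    calc ‖u‖ / h * ‖fderiv ℝ f ξ w‖ ≤ ‖u‖ / h * (2 * η + M * h ^ 2) := by
          gcongr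
      _ = (2 * η + M * h ^ 2) / h * ‖u‖ := by ring

lemma key2 {n : ℕ} {E : Type*} [NormedAddCommGroup E] [NormedSpace ℝ E]
    (f : EuclideanSpace ℝ (Fin n) → E) (hf : ContDiff ℝ 2 f)
    (h0 : Filter.Tendsto f (Filter.cocompact (EuclideanSpace ℝ (Fin n))) (nhds 0))
    (C R : ℝ) (hC : 0 < C) (hR : 0 < R)
    (hbound : ∀ ξ : EuclideanSpace ℝ (Fin n), R ≤ ‖ξ‖ →
      ‖iteratedFDeriv ℝ 2 f ξ‖ ≤ C * (‖ξ‖ ^ 2)⁻¹) :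
    ∀ δ > 0, ∃ M₁ : ℝ, ∀ ξ : EuclideanSpace ℝ (Fin n), M₁ ≤ ‖ξ‖ →
      ‖ξ‖ * ‖fderiv ℝ f ξ‖ ≤ δ := by
  intro δ hδ
  set ε := min (1/2 : ℝ) (δ / (12 * (C + 1))) with hεdef
  have hε0 : 0 < ε := lt_min (by norm_num) (div_pos hδ (by linarith))
  have hεhalf : ε ≤ 1/2 := min_le_left _ _
  have hεC : 4 * C * ε ≤ δ / 3 := by
    have h1 : ε ≤ δ / (12 * (C + 1)) := min_le_right _ _
    have h2 : 4 * C * ε ≤ 4 * C * (δ / (12 * (C + 1))) := by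
      apply mul_le_mul_of_nonneg_left h1 (by linarith)
    have h3 : 4 * C * (δ / (12 * (C + 1))) ≤ δ / 3 := by
      rw [← mul_div_assoc, div_le_div_iff₀ (by linarith) (by norm_num)]
      nlinarith
    linarith
  set η := δ * ε / 12 with hηdef
  have hη0 : 0 < η := by positivity
  -- extract M₀ from the decay at infinity
  have h0' : Filter.Tendsto f (Filter.comap norm Filter.atTop) (nhds 0) := by
    rw [comap_norm_atTop, cobounded_eq_cocompact]; exact h0
  have hev : ∀ᶠ x in Filter.comap norm Filter.atTop, ‖f x‖ < η :=
    (NormedAddCommGroup.tendsto_nhds_zero.mp h0') η hη0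
  obtain ⟨M₀, hM₀⟩ : ∃ M₀ : ℝ, ∀ x : EuclideanSpace ℝ (Fin n), M₀ ≤ ‖x‖ → ‖f x‖ < η := by
    rw [Filter.eventually_comap, Filter.eventually_atTop] at hev
    obtain ⟨b, hb⟩ := hev
    exact ⟨b, fun x hx => hb ‖x‖ hx x rfl⟩
  refine ⟨max (2 * R) (max (2 * M₀) 1), fun ξ hξ => ?_⟩
  have hξ1 : (1 : ℝ) ≤ ‖ξ‖ := le_trans (le_trans (le_max_right _ _) (le_max_right _ _)) hξ
  have hξpos : 0 < ‖ξ‖ := by linarith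
  have hξR : 2 * R ≤ ‖ξ‖ := le_trans (le_max_left _ _) hξ
  have hξM₀ : 2 * M₀ ≤ ‖ξ‖ := le_trans (le_trans (le_max_left _ _) (le_max_right _ _)) hξ
  set h : ℝ := ε * ‖ξ‖ with hhdef
  have hh0 : 0 < h := by positivity
  have hballnorm : ∀ x ∈ Metric.closedBall ξ h, ‖ξ‖ / 2 ≤ ‖x‖ := by
    intro x hx
    have h1 : ‖x - ξ‖ ≤ h := by
      rw [Metric.mem_closedBall, dist_eq_norm] at hx; exact hx
    have h2 : ‖ξ‖ - ‖x‖ ≤ ‖x - ξ‖ := by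
      have := norm_sub_norm_le (ξ) (x)
      rw [norm_sub_rev] at h1 ⊢
      linarith [norm_sub_norm_le ξ x]
    have : h ≤ ‖ξ‖ / 2 := by
      rw [hhdef]
      nlinarith
    linarith
  set M : ℝ := 4 * C / ‖ξ‖ ^ 2 with hMdef
  have hM0 : 0 ≤ M := by positivity
  have hball : ∀ x ∈ Metric.closedBall ξ h, ‖fderiv ℝ (fderiv ℝ f) x‖ ≤ M := by
    intro x hx
    have hxn : ‖ξ‖ / 2 ≤ ‖x‖ := hballnorm x hx
    have hxR : R ≤ ‖x‖ := by linarith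
    have h1 := hbound x hxR
    have h2 : C * (‖x‖ ^ 2)⁻¹ ≤ M := by
      rw [hMdef]
      rw [div_eq_mul_inv]
      have hx0 : 0 < ‖x‖ := by linarith
      have hsq : (‖ξ‖ / 2) ^ 2 ≤ ‖x‖ ^ 2 := by nlinarith
      have hinv : (‖x‖ ^ 2)⁻¹ ≤ ((‖ξ‖ / 2) ^ 2)⁻¹ := by
        apply inv_anti₀ (by positivity) hsq
      calc C * (‖x‖ ^ 2)⁻¹ ≤ C * ((‖ξ‖ / 2) ^ 2)⁻¹ := by
            exact mul_le_mul_of_nonneg_left hinv hC.le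
        _ = 4 * C * (‖ξ‖ ^ 2)⁻¹ := by
            rw [div_pow]
            rw [inv_div]
            ring
    exact le_trans (le_trans (norm_fderiv_fderiv_le f x) h1) h2
  have hsmall : ∀ x ∈ Metric.closedBall ξ h, ‖f x‖ ≤ η := by
    intro x hx
    have hxn : ‖ξ‖ / 2 ≤ ‖x‖ := hballnorm x hx
    exact (hM₀ x (by linarith)).le
  have hkey := key_est f hf hM0 hη0.le hh0 ξ hball hsmall
  have hMh : M * h ^ 2 = 4 * C * ε ^ 2 := by
    rw [hMdef, hhdef]
    field_simp
  have hfinal : ‖ξ‖ * ((2 * η + M * h ^ 2) / h) = 2 * η / ε + 4 * C * ε := by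
    rw [hMh, hhdef]
    field_simp
  have h2ηε : 2 * η / ε = δ / 6 := by
    rw [hηdef]
    field_simp
    ring
  calc ‖ξ‖ * ‖fderiv ℝ f ξ‖ ≤ ‖ξ‖ * ((2 * η + M * h ^ 2) / h) := by
        exact mul_le_mul_of_nonneg_left hkey hξpos.le
    _ = 2 * η / ε + 4 * C * ε := hfinal
    _ ≤ δ / 6 + δ / 3 := by rw [h2ηε]; linarith
    _ ≤ δ := by linarith


/-- Under the same hypotheses as Statement 0 (`f : ℝⁿ → E` of class `C²`,
`f ξ → 0` as `‖ξ‖ → ∞`, and `‖f''(ξ)‖ ≤ C · ‖ξ‖⁻²` for `‖ξ‖ ≥ R`), for every fixed nonzero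
vector `v ∈ ℝⁿ` the function `r ↦ r · ‖f'(r • v)‖` (for `r > 0`) tends to `0` both as
`r → 0⁺` and as `r → +∞`. -/
theorem radial_norm_fderiv_tendsto_zero
    {n : ℕ} {E : Type*} [NormedAddCommGroup E] [NormedSpace ℝ E]
    (f : EuclideanSpace ℝ (Fin n) → E) (hf : ContDiff ℝ 2 f)
    (h0 : Filter.Tendsto f (Filter.cocompact (EuclideanSpace ℝ (Fin n))) (nhds 0))
    (C R : ℝ) (hC : 0 < C) (hR : 0 < R)
    (hbound : ∀ ξ : EuclideanSpace ℝ (Fin n), R ≤ ‖ξ‖ →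
      ‖iteratedFDeriv ℝ 2 f ξ‖ ≤ C * (‖ξ‖ ^ 2)⁻¹)
    (v : EuclideanSpace ℝ (Fin n)) (hv : v ≠ 0) :
    Filter.Tendsto (fun r : ℝ => r * ‖fderiv ℝ f (r • v)‖)
      (nhdsWithin 0 (Set.Ioi 0)) (nhds 0) ∧
    Filter.Tendsto (fun r : ℝ => r * ‖fderiv ℝ f (r • v)‖)
      Filter.atTop (nhds 0) := by

  have hvn : 0 < ‖v‖ := norm_pos_iff.mpr hv
  constructor
  · -- r → 0⁺
    have hcont : Continuous (fderiv ℝ f) :=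
      (hf.fderiv_right (m := 1) (by norm_num)).continuous
    have h1 : Filter.Tendsto (fun r : ℝ => r * ‖fderiv ℝ f (r • v)‖) (nhds 0)
        (nhds (0 * ‖fderiv ℝ f ((0 : ℝ) • v)‖)) :=
      tendsto_id.mul (((hcont.comp (continuous_id.smul continuous_const)).norm).tendsto 0)
    rw [zero_mul] at h1
    exact h1.mono_left nhdsWithin_le_nhds
  · -- r → ∞
    rw [NormedAddCommGroup.tendsto_nhds_zero]
    intro δ hδ
    obtain ⟨M₁, hM₁⟩ := key2 f hf h0 C R hC hR hbound (δ * ‖v‖ / 2) (by positivity)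
    filter_upwards [Filter.eventually_ge_atTop (max 1 (M₁ / ‖v‖))] with r hr
    have hr1 : (1 : ℝ) ≤ r := le_trans (le_max_left _ _) hr
    have hr0 : 0 < r := by linarith
    have hnorm : ‖r • v‖ = r * ‖v‖ := by
      rw [norm_smul, Real.norm_eq_abs, abs_of_pos hr0]
    have hM1r : M₁ ≤ ‖r • v‖ := by
      rw [hnorm]
      have : M₁ / ‖v‖ ≤ r := le_trans (le_max_right _ _) hr
      calc M₁ = M₁ / ‖v‖ * ‖v‖ := by field_simp
        _ ≤ r * ‖v‖ := by gcongr
    have hkey := hM₁ (r • v) hM1r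
    rw [hnorm] at hkey
    have hval : r * ‖fderiv ℝ f (r • v)‖ ≤ δ / 2 := by
      have h2 : r * ‖v‖ * ‖fderiv ℝ f (r • v)‖ ≤ δ * ‖v‖ / 2 := hkey
      nlinarith [norm_nonneg (fderiv ℝ f (r • v))]
    have hnn : 0 ≤ r * ‖fderiv ℝ f (r • v)‖ := by positivity
    rw [Real.norm_eq_abs, abs_of_nonneg hnn]
    linarith
end

section
/- Let E be a normed vector space and let P : ℝᵐ → E be a smooth function such that for every natural number j there is a constant C_j with ‖DʲP(w)‖ ≤ C_j·(1 + ‖w‖)^{−j} for all w ∈ ℝᵐ, where DʲP denotes the j-th iterated Fréchet derivative. Define F : ℝ × ℝᵐ → E by F(t, w) := P(e^{−t}·w). Then for every natural number l and every natural number b there is a constant C such that ‖∂ₜˡ D_w^b F(t, w)‖ ≤ C·(eᵗ + ‖w‖)^{−b} for all (t, w) ∈ ℝ × ℝᵐ, where ∂ₜˡ denotes the l-th partial derivative in t and D_w^b the b-th iterated Fréchet derivative in the variable w. -/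
set_option maxHeartbeats 1000000


section Aux

variable {V : Type*} {E : Type*} [NormedAddCommGroup V] [NormedSpace ℝ V]
  [NormedAddCommGroup E] [NormedSpace ℝ E]

def GoodSymb (Q : V → E) : Prop :=
  ContDiff ℝ ((⊤ : ℕ∞) : WithTop ℕ∞) Q ∧
    ∀ b : ℕ, ∃ C : ℝ, ∀ v : V, ‖iteratedFDeriv ℝ b Q v‖ ≤ C * ((1 + ‖v‖) ^ b)⁻¹

lemma norm_iteratedFDeriv_id_le (n : ℕ) (x : V) :
    ‖iteratedFDeriv ℝ n (fun y : V => y) x‖ ≤ if n = 0 then ‖x‖ else if n = 1 then 1 else 0 := by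
  match n with
  | 0 => simp
  | 1 =>
      have h : ‖iteratedFDeriv ℝ 0 (fderiv ℝ (fun y : V => y)) x‖
          = ‖iteratedFDeriv ℝ 1 (fun y : V => y) x‖ := norm_iteratedFDeriv_fderiv
      rw [norm_iteratedFDeriv_zero] at h
      simp only [if_neg one_ne_zero, if_pos rfl]
      rw [← h, fderiv_id']
      simpa using ContinuousLinearMap.norm_id_le
  | (k+2) =>
      have h : ‖iteratedFDeriv ℝ (k+1) (fderiv ℝ (fun y : V => y)) x‖
          = ‖iteratedFDeriv ℝ (k+2) (fun y : V => y) x‖ := norm_iteratedFDeriv_fderiv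
      have h2 : (fderiv ℝ (fun y : V => y)) = fun _ : V => ContinuousLinearMap.id ℝ V :=
        funext fun y => fderiv_id'
      rw [h2, iteratedFDeriv_const_of_ne (Nat.succ_ne_zero k)] at h
      simp only [if_neg (by omega : k + 2 ≠ 0), if_neg (by omega : k + 2 ≠ 1)]
      rw [← h]; simp

lemma nonneg_const_of_symb {Q : V → E} {b : ℕ} {C : ℝ}
    (h : ∀ v : V, ‖iteratedFDeriv ℝ b Q v‖ ≤ C * ((1 + ‖v‖) ^ b)⁻¹) : 0 ≤ C := by
  have := h 0
  simp at this
  exact le_trans (norm_nonneg _) this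


lemma GoodSymb.dil {Q : V → E} (h : GoodSymb Q) : GoodSymb (fun v => fderiv ℝ Q v v) := by
  obtain ⟨hQ, hb⟩ := h
  have hQ' : ContDiff ℝ ((⊤ : ℕ∞) : WithTop ℕ∞) (fderiv ℝ Q) :=
    hQ.fderiv_right (by exact_mod_cast le_top)
  constructor
  · exact hQ'.clm_apply contDiff_id
  · intro n
    obtain ⟨C1, hC1⟩ := hb (n + 1)
    obtain ⟨C0, hC0⟩ := hb n
    have hC1' : 0 ≤ C1 := nonneg_const_of_symb hC1
    have hC0' : 0 ≤ C0 := nonneg_const_of_symb hC0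
    set M : ℝ := max C1 C0 with hM
    have hM0 : 0 ≤ M := le_trans hC1' (le_max_left _ _)
    refine ⟨2 ^ n * M, fun x => ?_⟩
    have hx1 : (0:ℝ) < 1 + ‖x‖ := by positivity
    have key := norm_iteratedFDeriv_clm_apply (f := fderiv ℝ Q) (g := fun y : V => y) (n := n)
      hQ' contDiff_id x (by exact_mod_cast le_top)
    refine le_trans key ?_
    have hterm : ∀ i ∈ Finset.range (n + 1), (n.choose i : ℝ) *
          ‖iteratedFDeriv ℝ i (fderiv ℝ Q) x‖ * ‖iteratedFDeriv ℝ (n - i) (fun y : V => y) x‖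
        ≤ (n.choose i : ℝ) * (M * ((1 + ‖x‖) ^ n)⁻¹) := by
      intro i hi
      rw [Finset.mem_range] at hi
      have hid := norm_iteratedFDeriv_id_le (n - i) x
      have hder : ‖iteratedFDeriv ℝ i (fderiv ℝ Q) x‖
          = ‖iteratedFDeriv ℝ (i + 1) Q x‖ := norm_iteratedFDeriv_fderiv
      have hchoose : (0:ℝ) ≤ (n.choose i : ℝ) := by positivity
      match hni : n - i with
      | 0 =>
          -- i = n
          have hin : i = n := by omega
          rw [hni, if_pos rfl] at hid
          rw [hder, hin]
          have h1 : ‖iteratedFDeriv ℝ (n + 1) Q x‖ ≤ C1 * ((1 + ‖x‖) ^ (n+1))⁻¹ := hC1 x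
          have hxle : ‖x‖ * (1 + ‖x‖)⁻¹ ≤ 1 := by
            rw [← div_eq_mul_inv, div_le_one hx1]; linarith [norm_nonneg x]
          have hmain : C1 * ((1 + ‖x‖) ^ (n+1))⁻¹ * ‖x‖ ≤ M * ((1 + ‖x‖) ^ n)⁻¹ := by
            rw [pow_succ, mul_inv]
            calc C1 * (((1 + ‖x‖) ^ n)⁻¹ * (1 + ‖x‖)⁻¹) * ‖x‖
                = (‖x‖ * (1 + ‖x‖)⁻¹) * (C1 * ((1 + ‖x‖) ^ n)⁻¹) := by ring
              _ ≤ 1 * (M * ((1 + ‖x‖) ^ n)⁻¹) := by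
                  apply mul_le_mul hxle ?_ (by positivity) (by norm_num)
                  exact mul_le_mul_of_nonneg_right (le_max_left _ _) (by positivity)
              _ = M * ((1 + ‖x‖) ^ n)⁻¹ := one_mul _
          calc (n.choose n : ℝ) * ‖iteratedFDeriv ℝ (n + 1) Q x‖ *
                ‖iteratedFDeriv ℝ 0 (fun y : V => y) x‖
              ≤ 1 * (C1 * ((1 + ‖x‖) ^ (n+1))⁻¹) * ‖x‖ := by
                simp only [Nat.choose_self, Nat.cast_one]
                exact mul_le_mul (by simpa using h1) hid (norm_nonneg _) (by positivity)
            _ = C1 * ((1 + ‖x‖) ^ (n+1))⁻¹ * ‖x‖ := by ring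
            _ ≤ M * ((1 + ‖x‖) ^ n)⁻¹ := hmain
            _ ≤ (n.choose n : ℝ) * (M * ((1 + ‖x‖) ^ n)⁻¹) := by
                simp only [Nat.choose_self, Nat.cast_one, one_mul, le_refl]
      | 1 =>
          -- i = n - 1, i + 1 = n
          have hin : i + 1 = n := by omega
          rw [hni, if_neg one_ne_zero, if_pos rfl] at hid
          rw [hder, hin]
          have h1 : ‖iteratedFDeriv ℝ n Q x‖ ≤ C0 * ((1 + ‖x‖) ^ n)⁻¹ := hC0 x
          calc (n.choose i : ℝ) * ‖iteratedFDeriv ℝ n Q x‖ *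
                ‖iteratedFDeriv ℝ 1 (fun y : V => y) x‖
              ≤ (n.choose i : ℝ) * (C0 * ((1 + ‖x‖) ^ n)⁻¹) * 1 := by
                apply mul_le_mul (mul_le_mul_of_nonneg_left h1 hchoose) hid
                  (norm_nonneg _) (by positivity)
            _ ≤ (n.choose i : ℝ) * (M * ((1 + ‖x‖) ^ n)⁻¹) := by
                rw [mul_one]
                exact mul_le_mul_of_nonneg_left
                  (mul_le_mul_of_nonneg_right (le_max_right _ _) (by positivity)) hchoose
      | (k+2) =>
          rw [hni] at hid
          simp only [if_neg (by omega : k + 2 ≠ 0), if_neg (by omega : k + 2 ≠ 1)] at hid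
          have hzero : ‖iteratedFDeriv ℝ (k+2) (fun y : V => y) x‖ = 0 :=
            le_antisymm hid (norm_nonneg _)
          rw [hzero]
          have hpos : (0:ℝ) ≤ (n.choose i : ℝ) * (M * ((1 + ‖x‖) ^ n)⁻¹) := by positivity
          simpa using hpos
    calc (∑ i ∈ Finset.range (n + 1), (n.choose i : ℝ) *
            ‖iteratedFDeriv ℝ i (fderiv ℝ Q) x‖ *
            ‖iteratedFDeriv ℝ (n - i) (fun y : V => y) x‖)
        ≤ ∑ i ∈ Finset.range (n + 1), (n.choose i : ℝ) * (M * ((1 + ‖x‖) ^ n)⁻¹) :=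
          Finset.sum_le_sum hterm
      _ = (2 ^ n : ℝ) * (M * ((1 + ‖x‖) ^ n)⁻¹) := by
          rw [← Finset.sum_mul]
          norm_cast
          rw [Nat.sum_range_choose]
      _ = 2 ^ n * M * ((1 + ‖x‖) ^ n)⁻¹ := by ring

end Aux

section Aux2

variable {V : Type*} {E : Type*} [NormedAddCommGroup V] [NormedSpace ℝ V]
  [NormedAddCommGroup E] [NormedSpace ℝ E]

/-- The operation `Q ↦ (v ↦ -(DQ(v)[v]))`. -/
noncomputable def negDil (Q : V → E) : V → E := fun v => -(fderiv ℝ Q v v)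

lemma goodSymb_negDil {Q : V → E} (h : GoodSymb Q) : GoodSymb (negDil Q) := by
  obtain ⟨h1, h2⟩ := h.dil
  constructor
  · exact h1.neg
  · intro b
    obtain ⟨C, hC⟩ := h2 b
    refine ⟨C, fun v => ?_⟩
    have : (_root_.negDil Q) = -(fun v : V => fderiv ℝ Q v v) := rfl
    rw [this, iteratedFDeriv_neg_apply, norm_neg]
    exact hC v

lemma goodSymb_negDil_iter {Q : V → E} (h : GoodSymb Q) (l : ℕ) :
    GoodSymb (negDil^[l] Q) := by
  induction l with
  | zero => exact h
  | succ l ih => rw [Function.iterate_succ_apply']; exact goodSymb_negDil ih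

lemma hasDerivAt_exp_scale {R : V → E} (hR : ContDiff ℝ ((⊤ : ℕ∞) : WithTop ℕ∞) R)
    (w : V) (t : ℝ) :
    HasDerivAt (fun t' => R (Real.exp (-t') • w)) (negDil R (Real.exp (-t) • w)) t := by
  have h1 : HasDerivAt (fun t' : ℝ => Real.exp (-t')) (-Real.exp (-t)) t := by
    simpa [Function.comp_def] using (Real.hasDerivAt_exp (-t)).comp t (hasDerivAt_neg t)
  have h2 : HasDerivAt (fun t' : ℝ => Real.exp (-t') • w) ((-Real.exp (-t)) • w) t :=
    h1.smul_const w
  have h3 : HasFDerivAt R (fderiv ℝ R (Real.exp (-t) • w)) (Real.exp (-t) • w) :=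
    (hR.differentiable (by simp) (Real.exp (-t) • w)).hasFDerivAt
  have h4 := h3.comp_hasDerivAt t h2
  have h5 : fderiv ℝ R (Real.exp (-t) • w) ((-Real.exp (-t)) • w)
      = negDil R (Real.exp (-t) • w) := by
    rw [neg_smul, map_neg]; rfl
  rw [← h5]
  exact h4

lemma iteratedDeriv_exp_scale {Q : V → E} (h : GoodSymb Q) (w : V) (l : ℕ) (t : ℝ) :
    iteratedDeriv l (fun t' => Q (Real.exp (-t') • w)) t
      = (negDil^[l] Q) (Real.exp (-t) • w) := by
  induction l generalizing t with
  | zero => simp [iteratedDeriv_zero]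
  | succ l ih =>
      rw [iteratedDeriv_succ]
      have hfun : iteratedDeriv l (fun t' => Q (Real.exp (-t') • w))
          = fun t' => (negDil^[l] Q) (Real.exp (-t') • w) := funext fun t' => ih t'
      rw [hfun, Function.iterate_succ_apply']
      exact (hasDerivAt_exp_scale (goodSymb_negDil_iter h l).1 w t).deriv

end Aux2

section Final

variable {V : Type*} {E : Type*} [NormedAddCommGroup V] [NormedSpace ℝ V]
  [NormedAddCommGroup E] [NormedSpace ℝ E]

lemma goodSymb_main {P : V → E} (h : GoodSymb P) :
    ∀ l b : ℕ, ∃ C : ℝ, ∀ (t : ℝ) (w : V),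
      ‖iteratedFDeriv ℝ b
          (fun w' => iteratedDeriv l (fun t' => P (Real.exp (-t') • w')) t) w‖ ≤
        C * ((Real.exp t + ‖w‖) ^ b)⁻¹ := by
  intro l b
  have hR : GoodSymb (negDil^[l] P) := goodSymb_negDil_iter h l
  obtain ⟨C, hC⟩ := hR.2 b
  refine ⟨C, fun t w => ?_⟩
  set R : V → E := negDil^[l] P with hRdef
  set c : ℝ := Real.exp (-t) with hc
  have hcpos : 0 < c := Real.exp_pos _
  have hXpos : (0 : ℝ) < Real.exp t + ‖w‖ := by positivity
  -- identify the function with R ∘ (c • id)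
  have hfun : (fun w' : V => iteratedDeriv l (fun t' => P (Real.exp (-t') • w')) t)
      = R ∘ (c • ContinuousLinearMap.id ℝ V) := by
    funext w'
    have := iteratedDeriv_exp_scale h w' l t
    simpa using this
  rw [hfun]
  have hg : ∀ i : ℕ, (i : WithTop ℕ∞) ≤ ((⊤ : ℕ∞) : WithTop ℕ∞) := fun i => by
    exact_mod_cast le_top
  rw [(c • ContinuousLinearMap.id ℝ V).iteratedFDeriv_comp_right hR.1 w (hg b)]
  have hgnorm : ‖c • ContinuousLinearMap.id ℝ V‖ ≤ c := by
    refine ContinuousLinearMap.opNorm_le_bound _ hcpos.le fun v => ?_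
    simp [norm_smul, abs_of_pos hcpos]
  have hbound := (iteratedFDeriv ℝ b R ((c • ContinuousLinearMap.id ℝ V) w)
    ).norm_compContinuousLinearMap_le (fun _ : Fin b => c • ContinuousLinearMap.id ℝ V)
  refine hbound.trans ?_
  have hval : (c • ContinuousLinearMap.id ℝ V) w = c • w := by simp
  rw [hval]
  have hprod : (∏ _i : Fin b, ‖c • ContinuousLinearMap.id ℝ V‖) ≤ c ^ b := by
    calc (∏ _i : Fin b, ‖c • ContinuousLinearMap.id ℝ V‖)
        ≤ ∏ _i : Fin b, c := Finset.prod_le_prod (fun _ _ => norm_nonneg _) fun _ _ => hgnorm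
      _ = c ^ b := by rw [Finset.prod_const, Finset.card_univ, Fintype.card_fin]
  have hcx : (1 + ‖c • w‖) = c * (Real.exp t + ‖w‖) := by
    rw [norm_smul, Real.norm_eq_abs, abs_of_pos hcpos, hc, Real.exp_neg]
    field_simp
  have halg : ((1 + ‖c • w‖) ^ b)⁻¹ * c ^ b = ((Real.exp t + ‖w‖) ^ b)⁻¹ := by
    rw [hcx, mul_pow, mul_inv,
      mul_comm ((c ^ b)⁻¹) (((Real.exp t + ‖w‖) ^ b)⁻¹), mul_assoc,
      inv_mul_cancel₀ (by positivity), mul_one]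
  have hCnn : 0 ≤ C := nonneg_const_of_symb hC
  calc ‖iteratedFDeriv ℝ b R (c • w)‖ * ∏ _i : Fin b, ‖c • ContinuousLinearMap.id ℝ V‖
      ≤ (C * ((1 + ‖c • w‖) ^ b)⁻¹) * c ^ b := by
        refine mul_le_mul (hC (c • w)) hprod (Finset.prod_nonneg fun _ _ => norm_nonneg _) ?_
        positivity
    _ = C * (((1 + ‖c • w‖) ^ b)⁻¹ * c ^ b) := by ring
    _ = C * ((Real.exp t + ‖w‖) ^ b)⁻¹ := by rw [halg]

end Final


/-- Let `P : ℝᵐ → E` be smooth with `‖DʲP(w)‖ ≤ C_j (1+‖w‖)^{-j}` for every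
`j`.  Define `F (t, w) := P (e^{-t} • w)`.  Then for all `l, b : ℕ` there is `C` with
`‖∂ₜˡ D_w^b F (t, w)‖ ≤ C (eᵗ + ‖w‖)^{-b}` for all `(t, w)`, where `∂ₜˡ D_w^b F` is the
`b`-th iterated Fréchet derivative in `w` of the `l`-th derivative in `t`. -/
theorem exp_scaled_symbol_estimate
    {m : ℕ} {E : Type*} [NormedAddCommGroup E] [NormedSpace ℝ E]
    (P : EuclideanSpace ℝ (Fin m) → E) (hP : ContDiff ℝ (⊤ : ℕ∞) P)
    (hest : ∀ j : ℕ, ∃ C : ℝ, ∀ w : EuclideanSpace ℝ (Fin m),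
      ‖iteratedFDeriv ℝ j P w‖ ≤ C * ((1 + ‖w‖) ^ j)⁻¹) :
    ∀ l b : ℕ, ∃ C : ℝ, ∀ (t : ℝ) (w : EuclideanSpace ℝ (Fin m)),
      ‖iteratedFDeriv ℝ b
          (fun w' => iteratedDeriv l (fun t' => P (Real.exp (-t') • w')) t) w‖ ≤
        C * ((Real.exp t + ‖w‖) ^ b)⁻¹ := by
  exact goodSymb_main ⟨hP.of_le (by simp), hest⟩
end

section
/- Let E be a normed vector space and let P : ℝ × ℝᵐ → E be a smooth function such that for all natural numbers j and b there is a constant C_{j,b} with ‖∂ᵣʲ D_w^b P(r, w)‖ ≤ C_{j,b}·(1 + ‖w‖)^{−b} for all r ∈ [0, 1] and all w ∈ ℝᵐ, where ∂ᵣʲ denotes the j-th partial derivative in the first variable and D_w^b the b-th iterated Fréchet derivative in the second variable. Define F(t, w) := P(e^{−t}, e^{−t}·w). Then for every natural number l and every natural number b there is a constant C such that ‖∂ₜˡ D_w^b F(t, w)‖ ≤ C·(1 + ‖w‖)^{−b} for all t ≥ 0 and all w ∈ ℝᵐ. -/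
open Real Set

section Aux

variable {V E : Type*} [NormedAddCommGroup V] [NormedSpace ℝ V]
  [NormedAddCommGroup E] [NormedSpace ℝ E]

local notation "∞'" => ((⊤ : ℕ∞) : WithTop ℕ∞)

lemma cse_one_le : (1 : WithTop ℕ∞) ≤ ∞' := by exact_mod_cast le_top

lemma cse_two_le : (2 : WithTop ℕ∞) ≤ ∞' := by
  have : ((2:ℕ∞) : WithTop ℕ∞) ≤ ((⊤:ℕ∞) : WithTop ℕ∞) := by exact_mod_cast (le_top : (2:ℕ∞) ≤ ⊤)
  simpa using this

lemma cse_nat_le (b : ℕ) : (b : WithTop ℕ∞) ≤ ∞' := by exact_mod_cast le_top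

lemma cse_succ_le : ∞' + 1 ≤ ∞' := by
  have : ((⊤ : ℕ∞) : WithTop ℕ∞) + 1 = ((⊤ : ℕ∞) : WithTop ℕ∞) := by
    exact_mod_cast (by simp : (⊤ : ℕ∞) + 1 = ⊤)
  exact this.le

/-- smoothness of the `w`-slice -/
lemma cse_sliceW {f : ℝ × V → E} (hf : ContDiff ℝ ∞' f) (r : ℝ) :
    ContDiff ℝ ∞' (fun w => f (r, w)) :=
  hf.comp (contDiff_const.prodMk contDiff_id)

/-- smoothness of the `r`-slice -/
lemma cse_sliceR {f : ℝ × V → E} (hf : ContDiff ℝ ∞' f) (w : V) :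
    ContDiff ℝ ∞' (fun r : ℝ => f (r, w)) :=
  hf.comp (contDiff_id.prodMk contDiff_const)

/-- the partial derivative in the scalar variable, as full derivative -/
lemma cse_derivR {f : ℝ × V → E} (hf : ContDiff ℝ ∞' f) (r : ℝ) (w : V) :
    deriv (fun r' => f (r', w)) r = fderiv ℝ f (r, w) (1, 0) := by
  have h1 : HasDerivAt (fun r' : ℝ => (r', w)) ((1 : ℝ), (0 : V)) r :=
    (hasDerivAt_id r).prodMk (hasDerivAt_const r w)
  have h2 := ((hf.differentiable (ne_of_gt (lt_of_lt_of_le zero_lt_one cse_one_le)) (r, w)).hasFDerivAt).comp_hasDerivAt r h1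
  exact h2.deriv

/-- the partial derivative in the vector variable, as full derivative -/
lemma cse_fderivW {f : ℝ × V → E} (hf : ContDiff ℝ ∞' f) (r : ℝ) (w : V) :
    fderiv ℝ (fun w' => f (r, w')) w
      = (fderiv ℝ f (r, w)).comp (ContinuousLinearMap.inr ℝ ℝ V) := by
  have h2 := ((hf.differentiable (ne_of_gt (lt_of_lt_of_le zero_lt_one cse_one_le)) (r, w)).hasFDerivAt).comp w
    (hasFDerivAt_prodMk_right r w)
  exact h2.fderiv

lemma cse_fderivW_apply {f : ℝ × V → E} (hf : ContDiff ℝ ∞' f) (r : ℝ) (w y : V) :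
    fderiv ℝ (fun w' => f (r, w')) w y = fderiv ℝ f (r, w) (0, y) := by
  rw [cse_fderivW hf]; rfl

/-- smoothness of `∂_r f` (expressed as full derivative in direction `(1,0)`) -/
lemma cse_f1_smooth {f : ℝ × V → E} (hf : ContDiff ℝ ∞' f) :
    ContDiff ℝ ∞' (fun x : ℝ × V => fderiv ℝ f x (1, 0)) :=
  (hf.fderiv_right cse_succ_le).clm_apply contDiff_const

end Aux

section Aux2

variable {V E : Type*} [NormedAddCommGroup V] [NormedSpace ℝ V]
  [NormedAddCommGroup E] [NormedSpace ℝ E]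

local notation "∞'" => ((⊤ : ℕ∞) : WithTop ℕ∞)

/-- Clairaut for one `r`-derivative and one `w`-derivative. -/
lemma cse_clairaut {f : ℝ × V → E} (hf : ContDiff ℝ ∞' f) (r : ℝ) (w y : V) :
    deriv (fun r' => fderiv ℝ (fun w' => f (r', w')) w y) r
      = fderiv ℝ (fun w' => fderiv ℝ f (r, w') (1, 0)) w y := by
  have hfd : ContDiff ℝ ∞' (fderiv ℝ f) := hf.fderiv_right cse_succ_le
  -- rewrite LHS inner function using cse_fderivW_apply
  have e1 : (fun r' => fderiv ℝ (fun w' => f (r', w')) w y)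
      = fun r' => fderiv ℝ f (r', w) (0, y) := by
    funext r'; exact cse_fderivW_apply hf r' w y
  have hg : ContDiff ℝ ∞' (fun x : ℝ × V => fderiv ℝ f x (0, y)) :=
    hfd.clm_apply contDiff_const
  rw [e1, cse_derivR hg r w]
  -- RHS: partial-w of f₁
  have hf1 : ContDiff ℝ ∞' (fun x : ℝ × V => fderiv ℝ f x (1, 0)) := cse_f1_smooth hf
  rw [cse_fderivW_apply hf1 r w y]
  -- both sides are second derivatives applied to (1,0),(0,y) in the two orders
  have hdiff : DifferentiableAt ℝ (fderiv ℝ f) (r, w) :=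
    (hfd.differentiable (ne_of_gt (lt_of_lt_of_le zero_lt_one cse_one_le))) (r, w)
  have key : ∀ u v : ℝ × V,
      fderiv ℝ (fun x : ℝ × V => fderiv ℝ f x u) (r, w) v
        = fderiv ℝ (fderiv ℝ f) (r, w) v u := by
    intro u v
    have : (fun x : ℝ × V => fderiv ℝ f x u)
        = fun x => (ContinuousLinearMap.apply ℝ E u) (fderiv ℝ f x) := rfl
    rw [this, fderiv_clm_apply (c := fun _ : ℝ × V => ContinuousLinearMap.apply ℝ E u)
      (differentiableAt_const _) hdiff]
    simp
  rw [key, key]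
  exact (hf.contDiffAt.isSymmSndFDerivAt (by simpa using cse_two_le)).eq _ _
end Aux2

section Aux3

variable {V E : Type*} [NormedAddCommGroup V] [NormedSpace ℝ V]
  [NormedAddCommGroup E] [NormedSpace ℝ E]

local notation "∞'" => ((⊤ : ℕ∞) : WithTop ℕ∞)

/-- pushing one scalar derivative inside an iterated slice derivative -/
lemma cse_itd_slice_succ {f : ℝ × V → E} (hf : ContDiff ℝ ∞' f) (j : ℕ) (r : ℝ) (w : V) :
    iteratedDeriv (j + 1) (fun r' => f (r', w)) r
      = iteratedDeriv j (fun r' => fderiv ℝ f (r', w) (1, 0)) r := by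
  rw [iteratedDeriv_succ']
  congr 1
  funext r'
  exact cse_derivR hf r' w

/-- commuting `j` scalar derivatives past one Fréchet derivative in `w` -/
lemma cse_swap {f : ℝ × V → E} (hf : ContDiff ℝ ∞' f) (j : ℕ) (r : ℝ) (w y : V) :
    iteratedDeriv j (fun r' => fderiv ℝ (fun w' => f (r', w')) w y) r
      = fderiv ℝ (fun w' => iteratedDeriv j (fun r' => f (r', w')) r) w y := by
  induction j generalizing f with
  | zero => simp only [iteratedDeriv_zero]
  | succ j IH =>
    have hf1 : ContDiff ℝ ∞' (fun x : ℝ × V => fderiv ℝ f x (1, 0)) := cse_f1_smooth hf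
    rw [iteratedDeriv_succ']
    have e1 : deriv (fun r' => fderiv ℝ (fun w' => f (r', w')) w y)
        = fun r'' => fderiv ℝ (fun w' => (fun x : ℝ × V => fderiv ℝ f x (1, 0)) (r'', w')) w y := by
      funext r''
      exact cse_clairaut hf r'' w y
    rw [e1, IH hf1]
    have e2 : (fun w' => iteratedDeriv j
          (fun r' => (fun x : ℝ × V => fderiv ℝ f x (1, 0)) (r', w')) r)
        = fun w' => iteratedDeriv (j + 1) (fun r' => f (r', w')) r := by
      funext w'
      exact (cse_itd_slice_succ hf j r w').symm
    rw [e2]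

/-- joint smoothness of the iterated partial scalar derivative -/
lemma cse_Pj_smooth {f : ℝ × V → E} (hf : ContDiff ℝ ∞' f) (j : ℕ) :
    ContDiff ℝ ∞' (fun x : ℝ × V => iteratedDeriv j (fun r' => f (r', x.2)) x.1) := by
  induction j generalizing f with
  | zero => simpa only [iteratedDeriv_zero] using hf
  | succ j IH =>
    have hf1 : ContDiff ℝ ∞' (fun x : ℝ × V => fderiv ℝ f x (1, 0)) := cse_f1_smooth hf
    have e1 : (fun x : ℝ × V => iteratedDeriv (j+1) (fun r' => f (r', x.2)) x.1)
        = fun x : ℝ × V =>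
            iteratedDeriv j (fun r' => (fun z : ℝ × V => fderiv ℝ f z (1, 0)) (r', x.2)) x.1 := by
      funext x
      exact cse_itd_slice_succ hf j x.1 x.2
    rw [e1]
    exact IH hf1

/-- additivity of iterated one-dimensional derivatives -/
lemma cse_itd_add {g h : ℝ → E} (j : ℕ) (hg : ContDiff ℝ ∞' g) (hh : ContDiff ℝ ∞' h) (r : ℝ) :
    iteratedDeriv j (fun s => g s + h s) r = iteratedDeriv j g r + iteratedDeriv j h r := by
  simp only [iteratedDeriv_eq_iteratedFDeriv]
  rw [iteratedFDeriv_add_apply' (hg.of_le (cse_nat_le j)).contDiffAt (hh.of_le (cse_nat_le j)).contDiffAt]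
  rfl

/-- 1D Leibniz rule for multiplication by the variable -/
lemma cse_itd_smul {g : ℝ → E} (j : ℕ) (hg : ContDiff ℝ ∞' g) (r : ℝ) :
    iteratedDeriv j (fun s => s • g s) r
      = r • iteratedDeriv j g r + (j : ℝ) • iteratedDeriv (j - 1) g r := by
  induction j generalizing g with
  | zero => simp
  | succ j IH =>
    have hg' : ContDiff ℝ ∞' (deriv g) := by
      have : deriv g = fun x => fderiv ℝ g x 1 := by
        funext x; rw [← fderiv_apply_one_eq_deriv]
      rw [this]
      exact (hg.fderiv_right cse_succ_le).clm_apply contDiff_const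
    rw [iteratedDeriv_succ']
    have e1 : deriv (fun s => s • g s) = fun s => s • deriv g s + g s := by
      funext s
      have := (hasDerivAt_id' s).smul ((hg.differentiable (ne_of_gt (lt_of_lt_of_le zero_lt_one cse_one_le)) s).hasDerivAt)
      exact this.deriv.trans (by rw [one_smul])
    rw [e1, cse_itd_add (g := fun s => s • deriv g s) (h := g) j
      (by exact contDiff_id.smul hg') hg r, IH hg']
    have e2 : iteratedDeriv j (deriv g) r = iteratedDeriv (j + 1) g r := by
      rw [iteratedDeriv_succ']
    rcases Nat.eq_zero_or_pos j with hj | hj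
    · subst hj; simp [e2]
    · have e3 : iteratedDeriv (j - 1) (deriv g) r = iteratedDeriv j g r := by
        rw [← iteratedDeriv_succ']
        congr 1
        omega
      rw [e2, e3]
      push_cast
      rw [add_smul, one_smul]
      abel

end Aux3

section Aux4

variable {V E : Type*} [NormedAddCommGroup V] [NormedSpace ℝ V]
  [NormedAddCommGroup E] [NormedSpace ℝ E]

local notation "∞'" => ((⊤ : ℕ∞) : WithTop ℕ∞)

lemma cse_id_one (w : V) : ‖iteratedFDeriv ℝ 1 (id : V → V) w‖ ≤ 1 := by
  rw [← norm_iteratedFDeriv_fderiv (n := 0), norm_iteratedFDeriv_zero]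
  rw [fderiv_id]
  exact ContinuousLinearMap.norm_id_le

lemma cse_id_ge2 (k : ℕ) (w : V) : ‖iteratedFDeriv ℝ (k + 2) (id : V → V) w‖ = 0 := by
  rw [← norm_iteratedFDeriv_fderiv (n := k + 1)]
  have e : fderiv ℝ (id : V → V) = fun _ : V => ContinuousLinearMap.id ℝ V :=
    funext fun y => fderiv_id
  rw [e, iteratedFDeriv_const_of_ne (Nat.succ_ne_zero k)]
  simp

/-- The crucial closure property: if `P` satisfies the symbol-type estimates, so does
`Q x = -(fderiv P x) x`. -/
lemma cse_goodQ {P : ℝ × V → E} (hP : ContDiff ℝ ∞' P)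
    (hest : ∀ j b : ℕ, ∃ C : ℝ, ∀ r ∈ Set.Icc (0:ℝ) 1, ∀ w : V,
      ‖iteratedFDeriv ℝ b (fun w' => iteratedDeriv j (fun r' => P (r', w')) r) w‖ ≤
        C * ((1 + ‖w‖) ^ b)⁻¹) :
    ∀ j b : ℕ, ∃ C : ℝ, ∀ r ∈ Set.Icc (0:ℝ) 1, ∀ w : V,
      ‖iteratedFDeriv ℝ b (fun w' => iteratedDeriv j
          (fun r' => -(fderiv ℝ P (r', w') (r', w'))) r) w‖ ≤
        C * ((1 + ‖w‖) ^ b)⁻¹ := by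
  choose C hC using hest
  have hK : ∀ a c : ℕ, ∀ r ∈ Set.Icc (0:ℝ) 1, ∀ w : V,
      ‖iteratedFDeriv ℝ c (fun w' => iteratedDeriv a (fun r' => P (r', w')) r) w‖ ≤
        max (C a c) 0 * ((1 + ‖w‖) ^ c)⁻¹ := by
    intro a c r hr w
    exact (hC a c r hr w).trans (by
      have h1 : (0:ℝ) ≤ ((1 + ‖w‖) ^ c)⁻¹ := by positivity
      exact mul_le_mul_of_nonneg_right (le_max_left _ _) h1)
  set K : ℕ → ℕ → ℝ := fun a c => max (C a c) 0 with hKdef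
  have hKnn : ∀ a c, 0 ≤ K a c := fun a c => le_max_right _ _
  set B : (V →L[ℝ] E) →L[ℝ] V →L[ℝ] E := (ContinuousLinearMap.apply ℝ E).flip with hBdef
  intro j b
  refine ⟨K (j+1) b + (j : ℝ) * K j b
      + ‖B‖ * ∑ i ∈ Finset.range (b + 1), (b.choose i : ℝ) * K j (i+1), ?_⟩
  intro r hr w
  -- the three slice functions
  set Gj : V → E := fun w' => iteratedDeriv j (fun r' => P (r', w')) r with hGjdef
  set Gj1 : V → E := fun w' => iteratedDeriv (j+1) (fun r' => P (r', w')) r with hGj1def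
  have hfdP : ContDiff ℝ ∞' (fderiv ℝ P) := hP.fderiv_right cse_succ_le
  have hPjs := cse_Pj_smooth hP
  have hGj : ContDiff ℝ ∞' Gj := by
    exact (hPjs j).comp (contDiff_const.prodMk contDiff_id)
  have hGj1 : ContDiff ℝ ∞' Gj1 := by
    exact (hPjs (j+1)).comp (contDiff_const.prodMk contDiff_id)
  have hGjfd : ContDiff ℝ ∞' (fderiv ℝ Gj) := hGj.fderiv_right cse_succ_le
  -- Step 1: identify the inner iterated derivative
  have ITDQ : (fun w' => iteratedDeriv j (fun r' => -(fderiv ℝ P (r', w') (r', w'))) r)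
      = fun w' => (-r) • Gj1 w'
          + ((-(j:ℝ)) • Gj w' + (-(1:ℝ)) • (fderiv ℝ Gj w') w') := by
    funext w'
    have hA : ContDiff ℝ ∞' (fun r' : ℝ => -(r' • fderiv ℝ P (r', w') (1, 0))) :=
      (contDiff_id.smul ((cse_f1_smooth hP).comp (contDiff_id.prodMk contDiff_const))).neg
    have hB2 : ContDiff ℝ ∞' (fun r' : ℝ => -(fderiv ℝ P (r', w') ((0:ℝ), w'))) :=
      (((hfdP.comp (contDiff_id.prodMk contDiff_const)).clm_apply contDiff_const)).neg
    have qd : (fun r' => -(fderiv ℝ P (r', w') (r', w')))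
        = fun r' => -(r' • fderiv ℝ P (r', w') (1, 0)) + -(fderiv ℝ P (r', w') ((0:ℝ), w')) := by
      funext r'
      have e : ((r' : ℝ), w') = r' • ((1:ℝ), (0:V)) + ((0:ℝ), w') := by
        simp [Prod.ext_iff]
      rw [← neg_add]
      congr 1
      calc fderiv ℝ P (r', w') (r', w')
          = fderiv ℝ P (r', w') (r' • ((1:ℝ), (0:V)) + ((0:ℝ), w')) := by rw [← e]
        _ = r' • fderiv ℝ P (r', w') (1, 0) + fderiv ℝ P (r', w') ((0:ℝ), w') := by
            rw [map_add, map_smul]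
    rw [qd, cse_itd_add j hA hB2 r]
    -- first summand
    have t1 : iteratedDeriv j (fun r' : ℝ => -(r' • fderiv ℝ P (r', w') (1, 0))) r
        = (-r) • Gj1 w' + (-(j:ℝ)) • Gj w' := by
      rw [iteratedDeriv_fun_neg]
      have hg : ContDiff ℝ ∞' (fun r' : ℝ => fderiv ℝ P (r', w') (1, 0)) :=
        (cse_f1_smooth hP).comp (contDiff_id.prodMk contDiff_const)
      rw [cse_itd_smul j hg r]
      have e1 : iteratedDeriv j (fun r' : ℝ => fderiv ℝ P (r', w') (1, 0)) r = Gj1 w' :=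
        (cse_itd_slice_succ hP j r w').symm
      have e2 : (j : ℝ) • iteratedDeriv (j-1) (fun r' : ℝ => fderiv ℝ P (r', w') (1, 0)) r
          = (j : ℝ) • Gj w' := by
        cases j with
        | zero => simp
        | succ k =>
          congr 1
          have := (cse_itd_slice_succ hP k r w').symm
          simpa using this
      rw [e1, neg_add, e2]
      simp [neg_smul]
    -- second summand
    have t2 : iteratedDeriv j (fun r' : ℝ => -(fderiv ℝ P (r', w') ((0:ℝ), w'))) r
        = (-(1:ℝ)) • (fderiv ℝ Gj w') w' := by
      rw [iteratedDeriv_fun_neg]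
      have e3 : (fun r' : ℝ => fderiv ℝ P (r', w') ((0:ℝ), w'))
          = fun r' : ℝ => fderiv ℝ (fun w'' => P (r', w'')) w' w' := by
        funext r'
        exact (cse_fderivW_apply hP r' w' w').symm
      rw [e3, cse_swap hP j r w' w']
      simp [hGjdef]
    rw [t1, t2]
    abel
  rw [ITDQ]
  -- Step 2: norm estimate
  have hbW : (b : WithTop ℕ∞) ≤ ∞' := cse_nat_le b
  have hs1 : ContDiff ℝ (b : WithTop ℕ∞) (fun w' => (-r) • Gj1 w') :=
    (hGj1.const_smul (-r)).of_le hbW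
  have hs2 : ContDiff ℝ (b : WithTop ℕ∞) (fun w' => (-(j:ℝ)) • Gj w') :=
    (hGj.const_smul (-(j:ℝ))).of_le hbW
  have hs3 : ContDiff ℝ (b : WithTop ℕ∞) (fun w' => (-(1:ℝ)) • (fderiv ℝ Gj w') w') :=
    ((hGjfd.clm_apply contDiff_id).const_smul (-(1:ℝ))).of_le hbW
  rw [iteratedFDeriv_add_apply' hs1.contDiffAt (hs2.add hs3).contDiffAt, iteratedFDeriv_add_apply' hs2.contDiffAt hs3.contDiffAt]
  rw [iteratedFDeriv_const_smul_apply' (hGj1.of_le hbW).contDiffAt,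
    iteratedFDeriv_const_smul_apply' (hGj.of_le hbW).contDiffAt,
    iteratedFDeriv_const_smul_apply'
      (by exact (hGjfd.clm_apply contDiff_id).of_le hbW :
        ContDiff ℝ (b : WithTop ℕ∞) (fun w' => (fderiv ℝ Gj w') w')).contDiffAt]
  have hinv : (0:ℝ) ≤ ((1 + ‖w‖) ^ b)⁻¹ := by positivity
  have hr0 : 0 ≤ r := hr.1
  have hr1 : r ≤ 1 := hr.2
  -- bound the three terms
  have n1 : ‖(-r) • iteratedFDeriv ℝ b Gj1 w‖ ≤ K (j+1) b * ((1 + ‖w‖) ^ b)⁻¹ := by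
    rw [norm_smul (-r) (iteratedFDeriv ℝ b Gj1 w)]
    have := hK (j+1) b r hr w
    calc ‖(-r)‖ * ‖iteratedFDeriv ℝ b Gj1 w‖
        ≤ 1 * (K (j+1) b * ((1 + ‖w‖) ^ b)⁻¹) := by
          apply mul_le_mul _ this (norm_nonneg _) zero_le_one
          rw [Real.norm_eq_abs, abs_neg, abs_of_nonneg hr0]; exact hr1
      _ = K (j+1) b * ((1 + ‖w‖) ^ b)⁻¹ := one_mul _
  have n2 : ‖(-(j:ℝ)) • iteratedFDeriv ℝ b Gj w‖ ≤ (j:ℝ) * K j b * ((1 + ‖w‖) ^ b)⁻¹ := by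
    rw [norm_smul (-(j:ℝ)) (iteratedFDeriv ℝ b Gj w)]
    have := hK j b r hr w
    rw [Real.norm_eq_abs, abs_neg, abs_of_nonneg (Nat.cast_nonneg j), mul_assoc]
    exact mul_le_mul_of_nonneg_left this (Nat.cast_nonneg j)
  have n3 : ‖(-(1:ℝ)) • iteratedFDeriv ℝ b (fun w' => (fderiv ℝ Gj w') w') w‖
      ≤ ‖B‖ * (∑ i ∈ Finset.range (b + 1), (b.choose i : ℝ) * K j (i+1))
          * ((1 + ‖w‖) ^ b)⁻¹ := by
    rw [norm_smul (-(1:ℝ)) (iteratedFDeriv ℝ b (fun w' => (fderiv ℝ Gj w') w') w)]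
    have hB1 : ‖(-(1:ℝ))‖ = 1 := by simp
    rw [hB1, one_mul]
    have ebil : (fun w' => (fderiv ℝ Gj w') w') = fun w' => B (fderiv ℝ Gj w') w' := rfl
    rw [ebil]
    have hbil := B.norm_iteratedFDeriv_le_of_bilinear hGjfd contDiff_id w hbW
    refine hbil.trans ?_
    rw [mul_assoc]
    apply mul_le_mul_of_nonneg_left _ (norm_nonneg B)
    rw [Finset.sum_mul]
    apply Finset.sum_le_sum
    intro i hi
    rw [Finset.mem_range] at hi
    have hi' : i ≤ b := Nat.lt_succ_iff.mp hi
    rw [mul_assoc, mul_assoc]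
    apply mul_le_mul_of_nonneg_left _ (Nat.cast_nonneg _)
    -- termwise : ‖D^i (fderiv Gj) w‖ * ‖D^(b-i) id w‖ ≤ K j (i+1) * ((1+‖w‖)^b)⁻¹
    have hd : ‖iteratedFDeriv ℝ i (fderiv ℝ Gj) w‖ ≤ K j (i+1) * ((1 + ‖w‖) ^ (i+1))⁻¹ := by
      rw [norm_iteratedFDeriv_fderiv]
      exact hK j (i+1) r hr w
    rcases hbi : b - i with _ | k
    · -- b - i = 0, so i = b
      have hib : i = b := by omega
      subst hib
      rw [norm_iteratedFDeriv_zero, id_eq]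
      calc ‖iteratedFDeriv ℝ i (fderiv ℝ Gj) w‖ * ‖w‖
          ≤ (K j (i+1) * ((1 + ‖w‖) ^ (i+1))⁻¹) * ‖w‖ :=
            mul_le_mul_of_nonneg_right hd (norm_nonneg w)
        _ ≤ K j (i+1) * ((1 + ‖w‖) ^ i)⁻¹ := by
            rw [mul_assoc]
            apply mul_le_mul_of_nonneg_left _ (hKnn j (i+1))
            rw [pow_succ, mul_inv]
            calc ((1 + ‖w‖) ^ i)⁻¹ * (1 + ‖w‖)⁻¹ * ‖w‖
                = ((1 + ‖w‖)⁻¹ * ‖w‖) * ((1 + ‖w‖) ^ i)⁻¹ := by ring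
              _ ≤ 1 * ((1 + ‖w‖) ^ i)⁻¹ := by
                  apply mul_le_mul_of_nonneg_right _ (by positivity)
                  rw [inv_mul_le_iff₀ (by positivity), mul_one]
                  linarith [norm_nonneg w]
              _ = ((1 + ‖w‖) ^ i)⁻¹ := one_mul _
    · rcases k with _ | k2
      · -- b - i = 1, so i + 1 = b
        have hib : i + 1 = b := by omega
        calc ‖iteratedFDeriv ℝ i (fderiv ℝ Gj) w‖ * ‖iteratedFDeriv ℝ 1 (id : V → V) w‖
            ≤ (K j (i+1) * ((1 + ‖w‖) ^ (i+1))⁻¹) * 1 :=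
              mul_le_mul hd (cse_id_one w) (norm_nonneg _) (by positivity)
          _ = K j (i+1) * ((1 + ‖w‖) ^ b)⁻¹ := by rw [mul_one, hib]
      · -- b - i ≥ 2
        rw [cse_id_ge2 k2 w, mul_zero]
        positivity
  calc ‖(-r) • iteratedFDeriv ℝ b Gj1 w
        + ((-(j:ℝ)) • iteratedFDeriv ℝ b Gj w
          + (-(1:ℝ)) • iteratedFDeriv ℝ b (fun w' => (fderiv ℝ Gj w') w') w)‖
      ≤ ‖(-r) • iteratedFDeriv ℝ b Gj1 w‖
        + (‖(-(j:ℝ)) • iteratedFDeriv ℝ b Gj w‖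
          + ‖(-(1:ℝ)) • iteratedFDeriv ℝ b (fun w' => (fderiv ℝ Gj w') w') w‖) :=
        (norm_add_le _ _).trans (by gcongr; exact norm_add_le _ _)
    _ ≤ K (j+1) b * ((1 + ‖w‖) ^ b)⁻¹
        + ((j:ℝ) * K j b * ((1 + ‖w‖) ^ b)⁻¹
          + ‖B‖ * (∑ i ∈ Finset.range (b + 1), (b.choose i : ℝ) * K j (i+1))
            * ((1 + ‖w‖) ^ b)⁻¹) := add_le_add n1 (add_le_add n2 n3)
    _ = (K (j+1) b + (j : ℝ) * K j b
        + ‖B‖ * ∑ i ∈ Finset.range (b + 1), (b.choose i : ℝ) * K j (i+1))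
          * ((1 + ‖w‖) ^ b)⁻¹ := by ring

end Aux4

section Aux5

variable {V E : Type*} [NormedAddCommGroup V] [NormedSpace ℝ V]
  [NormedAddCommGroup E] [NormedSpace ℝ E]

local notation "∞'" => ((⊤ : ℕ∞) : WithTop ℕ∞)

set_option maxHeartbeats 1000000 in
/-- Base case `l = 0`. -/
lemma cse_base {P : ℝ × V → E} (hP : ContDiff ℝ ∞' P)
    (hest : ∀ j b : ℕ, ∃ C : ℝ, ∀ r ∈ Set.Icc (0:ℝ) 1, ∀ w : V,
      ‖iteratedFDeriv ℝ b (fun w' => iteratedDeriv j (fun r' => P (r', w')) r) w‖ ≤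
        C * ((1 + ‖w‖) ^ b)⁻¹) (b : ℕ) :
    ∃ C : ℝ, ∀ t : ℝ, 0 ≤ t → ∀ w : V,
      ‖iteratedFDeriv ℝ b (fun w' => P (Real.exp (-t), Real.exp (-t) • w')) w‖ ≤
        C * ((1 + ‖w‖) ^ b)⁻¹ := by
  obtain ⟨C, hC⟩ := hest 0 b
  refine ⟨max C 0, ?_⟩
  intro t ht w
  set r := Real.exp (-t) with hrdef
  have hr0 : 0 < r := Real.exp_pos _
  have hr1 : r ≤ 1 := Real.exp_le_one_iff.mpr (by linarith)
  set A : V →L[ℝ] V := r • ContinuousLinearMap.id ℝ V with hAdef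
  have hAnorm : ‖A‖ ≤ r := by
    apply ContinuousLinearMap.opNorm_le_bound _ hr0.le
    intro x
    rw [hAdef]
    simp [norm_smul, abs_of_pos hr0]
  have eA : (fun w' => P (r, r • w')) = (fun u => P (r, u)) ∘ ⇑A := by
    funext w'
    simp [hAdef]
  have ecomp := A.iteratedFDeriv_comp_right (cse_sliceW hP r) w (cse_nat_le b)
  rw [eA, ecomp]
  have hCb : ‖iteratedFDeriv ℝ b (fun w' => P (r, w')) (A w)‖
      ≤ C * ((1 + ‖A w‖) ^ b)⁻¹ := by
    have h := hC r ⟨hr0.le, hr1⟩ (A w)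
    simpa only [iteratedDeriv_zero] using h
  have hAw : ‖A w‖ = r * ‖w‖ := by
    simp [hAdef, norm_smul, abs_of_pos hr0]
  have hprod : (∏ _i : Fin b, ‖A‖) ≤ r ^ b := by
    rw [Finset.prod_const, Finset.card_univ, Fintype.card_fin]
    exact pow_le_pow_left₀ (norm_nonneg A) hAnorm b
  calc ‖(iteratedFDeriv ℝ b (fun u => P (r, u)) (A w)).compContinuousLinearMap fun _ => A‖
      ≤ ‖iteratedFDeriv ℝ b (fun u => P (r, u)) (A w)‖ * ∏ _i : Fin b, ‖A‖ :=
        ContinuousMultilinearMap.norm_compContinuousLinearMap_le _ _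
    _ ≤ (max C 0 * ((1 + r * ‖w‖) ^ b)⁻¹) * r ^ b := by
        apply mul_le_mul _ hprod (Finset.prod_nonneg fun _ _ => norm_nonneg A)
          (by positivity)
        refine hCb.trans ?_
        rw [hAw]
        exact mul_le_mul_of_nonneg_right (le_max_left _ _) (by positivity)
    _ ≤ max C 0 * ((1 + ‖w‖) ^ b)⁻¹ := by
        rw [mul_assoc]
        apply mul_le_mul_of_nonneg_left _ (le_max_right C 0)
        -- ((1+r‖w‖)^b)⁻¹ * r^b ≤ ((1+‖w‖)^b)⁻¹
        have hX : (0:ℝ) < (1 + r * ‖w‖) ^ b := by positivity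
        have hY : (0:ℝ) < (1 + ‖w‖) ^ b := by positivity
        have key : r ^ b * (1 + ‖w‖) ^ b ≤ (1 + r * ‖w‖) ^ b := by
          rw [← mul_pow]
          apply pow_le_pow_left₀ (by positivity)
          nlinarith [norm_nonneg w]
        rw [mul_comm, ← div_eq_mul_inv]
        rw [div_le_iff₀ hX, inv_mul_eq_div, le_div_iff₀ hY]
        linarith [key]

/-- Main induction on the number of `t`-derivatives. -/
lemma cse_main (l : ℕ) : ∀ (P : ℝ × V → E), ContDiff ℝ ∞' P →
    (∀ j b : ℕ, ∃ C : ℝ, ∀ r ∈ Set.Icc (0:ℝ) 1, ∀ w : V,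
      ‖iteratedFDeriv ℝ b (fun w' => iteratedDeriv j (fun r' => P (r', w')) r) w‖ ≤
        C * ((1 + ‖w‖) ^ b)⁻¹) →
    ∀ b : ℕ, ∃ C : ℝ, ∀ t : ℝ, 0 ≤ t → ∀ w : V,
      ‖iteratedFDeriv ℝ b (fun w' => iteratedDeriv l
          (fun t' => P (Real.exp (-t'), Real.exp (-t') • w')) t) w‖ ≤
        C * ((1 + ‖w‖) ^ b)⁻¹ := by
  induction l with
  | zero =>
    intro P hP hest b
    obtain ⟨C, hC⟩ := cse_base hP hest b
    refine ⟨C, ?_⟩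
    intro t ht w
    simp only [iteratedDeriv_zero]
    exact hC t ht w
  | succ l IH =>
    intro P hP hest b
    have hQs : ContDiff ℝ ∞' (fun x : ℝ × V => -(fderiv ℝ P x x)) :=
      ((hP.fderiv_right cse_succ_le).clm_apply contDiff_id).neg
    obtain ⟨C, hC⟩ := IH (fun x : ℝ × V => -(fderiv ℝ P x x)) hQs (cse_goodQ hP hest) b
    refine ⟨C, ?_⟩
    intro t ht w
    have key : (fun w' => iteratedDeriv (l+1)
          (fun t' => P (Real.exp (-t'), Real.exp (-t') • w')) t)
        = fun w' => iteratedDeriv l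
            (fun t' => -(fderiv ℝ P (Real.exp (-t'), Real.exp (-t') • w')
              (Real.exp (-t'), Real.exp (-t') • w'))) t := by
      funext w'
      rw [iteratedDeriv_succ']
      congr 1
      funext t''
      have h1 : HasDerivAt (fun t' : ℝ => Real.exp (-t')) (-Real.exp (-t'')) t'' := by
        have := (Real.hasDerivAt_exp (-t'')).comp t'' ((hasDerivAt_id t'').neg)
        exact this.congr_deriv (by ring)
      have h2 : HasDerivAt (fun t' : ℝ => Real.exp (-t') • w')
          ((-Real.exp (-t'')) • w') t'' := h1.smul_const w'
      have h3 : HasDerivAt (fun t' : ℝ => ((Real.exp (-t') : ℝ), Real.exp (-t') • w'))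
          ((-Real.exp (-t''), (-Real.exp (-t'')) • w') : ℝ × V) t'' := h1.prodMk h2
      have h4 := (hP.differentiable (ne_of_gt (lt_of_lt_of_le zero_lt_one cse_one_le)) _).hasFDerivAt.comp_hasDerivAt t'' h3
      have h4' : HasDerivAt (fun t' => P (Real.exp (-t'), Real.exp (-t') • w'))
          ((fderiv ℝ P ((Real.exp (-t''), Real.exp (-t'') • w') : ℝ × V))
            ((-Real.exp (-t''), (-Real.exp (-t'')) • w') : ℝ × V)) t'' := h4
      rw [h4'.deriv]
      have e : ((-Real.exp (-t''), (-Real.exp (-t'')) • w') : ℝ × V)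
          = -((Real.exp (-t''), Real.exp (-t'') • w') : ℝ × V) := by
        simp [Prod.ext_iff]
      rw [e, map_neg]
    rw [key]
    exact hC t ht w

end Aux5

/-- Let `P : ℝ × ℝᵐ → E` be smooth with
`‖∂ᵣʲ D_w^b P (r, w)‖ ≤ C_{j,b} (1+‖w‖)^{-b}` for all `r ∈ [0,1]`, `w`, and all `j, b`.
Define `F (t, w) := P (e^{-t}, e^{-t} • w)`.  Then for all `l, b : ℕ` there is `C` with
`‖∂ₜˡ D_w^b F (t, w)‖ ≤ C (1+‖w‖)^{-b}` for all `t ≥ 0` and all `w`.  Here mixed derivatives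
are the `b`-th iterated Fréchet derivative in `w` of the iterated derivative in the scalar
variable. -/
theorem cone_symbol_estimate
    {m : ℕ} {E : Type*} [NormedAddCommGroup E] [NormedSpace ℝ E]
    (P : ℝ × EuclideanSpace ℝ (Fin m) → E) (hP : ContDiff ℝ (⊤ : ℕ∞) P)
    (hest : ∀ j b : ℕ, ∃ C : ℝ, ∀ r ∈ Set.Icc (0:ℝ) 1, ∀ w : EuclideanSpace ℝ (Fin m),
      ‖iteratedFDeriv ℝ b
          (fun w' => iteratedDeriv j (fun r' => P (r', w')) r) w‖ ≤
        C * ((1 + ‖w‖) ^ b)⁻¹) :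
    ∀ l b : ℕ, ∃ C : ℝ, ∀ t : ℝ, 0 ≤ t → ∀ w : EuclideanSpace ℝ (Fin m),
      ‖iteratedFDeriv ℝ b
          (fun w' => iteratedDeriv l
            (fun t' => P (Real.exp (-t'), Real.exp (-t') • w')) t) w‖ ≤
        C * ((1 + ‖w‖) ^ b)⁻¹ := by
  have hP' : ContDiff ℝ ((⊤ : ℕ∞) : WithTop ℕ∞) P := hP.of_le (by simp)
  intro l b
  exact cse_main l P hP' hest b
end

section
/- Let H₁ and H₂ be complex Hilbert spaces and let D : H₁ → H₂ be a bounded linear operator. Let P be the orthogonal projection of H₁ onto ker D and Q the orthogonal projection of H₂ onto ker D* (where D* is the Hilbert-space adjoint of D). Suppose that the operator A := P + D*D is invertible in the bounded operators on H₁, and let S be a positive bounded self-adjoint operator on H₁ with S² = A⁻¹. Then (D∘S)* ∘ (D∘S) = 1 − P and (D∘S) ∘ (D∘S)* = 1 − Q. Consequently, the block operator 𝒟 on H₁ ⊕ H₂ with zero diagonal blocks, upper-right block (D∘S)* and lower-left block D∘S, is self-adjoint and satisfies 𝒟² = 1 − (P ⊕ Q). -/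
open ContinuousLinearMap

variable {H₁ H₂ : Type*}
  [NormedAddCommGroup H₁] [InnerProductSpace ℂ H₁] [CompleteSpace H₁]
  [NormedAddCommGroup H₂] [InnerProductSpace ℂ H₂] [CompleteSpace H₂]

/-- The block operator on the Hilbert space `H₁ ⊕₂ H₂` with zero diagonal blocks, upper-right
block `(adjoint T)` and lower-left block `T`, i.e. `(x, y) ↦ ((adjoint T) y, T x)`. -/
noncomputable def blockOffDiagonal (T : H₁ →L[ℂ] H₂) :
    WithLp 2 (H₁ × H₂) →L[ℂ] WithLp 2 (H₁ × H₂) :=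
  ((WithLp.prodContinuousLinearEquiv 2 ℂ H₁ H₂).symm.toContinuousLinearMap) ∘L
    (((ContinuousLinearMap.adjoint T) ∘L ContinuousLinearMap.snd ℂ H₁ H₂).prod
      (T ∘L ContinuousLinearMap.fst ℂ H₁ H₂)) ∘L
    (WithLp.prodContinuousLinearEquiv 2 ℂ H₁ H₂).toContinuousLinearMap

/-- The block-diagonal operator `P ⊕ Q` on the Hilbert space `H₁ ⊕₂ H₂`. -/
noncomputable def blockDiagonal (P : H₁ →L[ℂ] H₁) (Q : H₂ →L[ℂ] H₂) :
    WithLp 2 (H₁ × H₂) →L[ℂ] WithLp 2 (H₁ × H₂) :=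
  ((WithLp.prodContinuousLinearEquiv 2 ℂ H₁ H₂).symm.toContinuousLinearMap) ∘L
    (P.prodMap Q) ∘L
    (WithLp.prodContinuousLinearEquiv 2 ℂ H₁ H₂).toContinuousLinearMap

/-! The key point is that `S` fixes `ker D`: since `P + D*D` acts as the identity there, so does
`S² = (P + D*D)⁻¹`, and a positive operator cannot have `-1` as an eigenvalue, so `S` does too.
Moreover `S` commutes with `P + D*D`, so `S (P + D*D) S = 1`, and
`(DS)*(DS) = S D*D S = S (P + D*D) S - S P S = 1 - P`. On the other side `T := D S² D*` satisfies
`D* T = D*` and `Q T = 0`, which forces `Q = 1 - T`. -/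

theorem mul_mul_eq_one_of_mul_self_inverse {M : Type*} [Monoid M] {s a : M}
    (h₁ : s * s * a = 1) (h₂ : a * (s * s) = 1) : s * a * s = 1 := by
  have hcomm : a * s = s * a :=
    calc a * s = a * s * (s * s * a) := by rw [h₁, mul_one]
      _ = a * (s * s) * (s * a) := by simp only [mul_assoc]
      _ = s * a := by rw [h₂, one_mul]
  rw [mul_assoc, hcomm, ← mul_assoc, h₁]

namespace ContinuousLinearMap

section Positive

variable {𝕜 E : Type*} [RCLike 𝕜] [NormedAddCommGroup E] [InnerProductSpace 𝕜 E]
  {T : E →L[𝕜] E}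

theorem IsPositive.eq_zero_of_apply_eq_neg (hT : T.IsPositive) {z : E} (h : T z = -z) :
    z = 0 := by
  have hre := hT.re_inner_nonneg_left z
  rw [h, inner_neg_left, map_neg, inner_self_eq_norm_sq, neg_nonneg] at hre
  exact norm_eq_zero.mp (pow_eq_zero_iff two_ne_zero |>.mp (le_antisymm hre (by positivity)))

theorem IsPositive.mul_eq_self_of_mul_mul_eq_self (hT : T.IsPositive) {P : E →L[𝕜] E}
    (h : T * T * P = P) : T * P = P := by
  ext x
  have hx : T (T (P x)) = P x := congr($h x)
  have hneg : T (T (P x) - P x) = -(T (P x) - P x) := by rw [map_sub, hx, neg_sub]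
  exact sub_eq_zero.mp (hT.eq_zero_of_apply_eq_neg hneg)

end Positive

section Normalization

variable {𝕜 E F : Type*} [RCLike 𝕜]
  [NormedAddCommGroup E] [InnerProductSpace 𝕜 E] [CompleteSpace E]
  [NormedAddCommGroup F] [InnerProductSpace 𝕜 F] [CompleteSpace F]
  {D : E →L[𝕜] F} {P S : E →L[𝕜] E}

theorem comp_adjoint_eq_zero_of_apply_mem_ker (hP : IsSelfAdjoint P)
    (h : ∀ x, P x ∈ LinearMap.ker (D : E →ₗ[𝕜] F)) : P ∘L adjoint D = 0 := by
  have hDP : D ∘L P = 0 := by ext x; exact h x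
  simpa only [adjoint_comp, hP.adjoint_eq, map_zero] using congrArg adjoint hDP

theorem adjoint_comp_self_eq_one_sub (hS : IsSelfAdjoint S) (hSP : S * P = P)
    (hPS : P * S = P) (hSA : S * S * (P + adjoint D ∘L D) = 1)
    (hAS : (P + adjoint D ∘L D) * (S * S) = 1) :
    adjoint (D ∘L S) ∘L (D ∘L S) = 1 - P := by
  have hSAS : S * (P + adjoint D ∘L D) * S = 1 := mul_mul_eq_one_of_mul_self_inverse hSA hAS
  calc adjoint (D ∘L S) ∘L (D ∘L S) = S * ((P + adjoint D ∘L D) - P) * S := by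
        rw [adjoint_comp, hS.adjoint_eq, add_sub_cancel_left]; rfl
    _ = S * (P + adjoint D ∘L D) * S - S * P * S := by rw [mul_sub, sub_mul]
    _ = 1 - P := by rw [hSAS, hSP, hPS]

theorem self_comp_adjoint_eq_one_sub {Q : F →L[𝕜] F} (hS : IsSelfAdjoint S)
    (hPS : P * S = P) (hAS : (P + adjoint D ∘L D) * (S * S) = 1)
    (hPD : P ∘L adjoint D = 0) (hQD : Q ∘L D = 0)
    (hQ : ∀ y ∈ LinearMap.ker (adjoint D : F →ₗ[𝕜] E), Q y = y) :
    (D ∘L S) ∘L adjoint (D ∘L S) = 1 - Q := by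
  set T := D ∘L (S * S) ∘L adjoint D
  have hDT : adjoint D ∘L T = adjoint D :=
    calc adjoint D ∘L T = ((P + adjoint D ∘L D - P) * (S * S)) ∘L adjoint D := by
          rw [add_sub_cancel_left]; rfl
      _ = (1 - P) ∘L adjoint D := by rw [sub_mul, hAS, ← mul_assoc, hPS, hPS]
      _ = adjoint D := by rw [sub_comp, hPD, sub_zero, one_def, id_comp]
  have hQT : Q ∘L T = 0 := by simp only [T, ← comp_assoc, hQD, zero_comp]
  have hfix : Q ∘L (1 - T) = 1 - T := by
    ext y
    refine hQ _ ?_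
    simp [LinearMap.mem_ker, ← comp_apply (adjoint D) T, hDT]
  have hQ_eq : Q = 1 - T :=
    calc Q = Q ∘L (1 - T) := by rw [comp_sub, one_def, comp_id, hQT, sub_zero]
      _ = 1 - T := hfix
  calc (D ∘L S) ∘L adjoint (D ∘L S) = T := by
        rw [adjoint_comp, hS.adjoint_eq]; rfl
    _ = 1 - Q := by rw [hQ_eq, sub_sub_cancel]

end Normalization

end ContinuousLinearMap

theorem isSelfAdjoint_blockOffDiagonal (T : H₁ →L[ℂ] H₂) :
    IsSelfAdjoint (blockOffDiagonal T) := by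
  rw [isSelfAdjoint_iff_isSymmetric]
  intro z w
  simp [blockOffDiagonal, WithLp.prod_inner_apply, adjoint_inner_left, adjoint_inner_right,
    add_comm]

theorem blockOffDiagonal_comp_self (T : H₁ →L[ℂ] H₂) :
    blockOffDiagonal T ∘L blockOffDiagonal T = blockDiagonal (adjoint T ∘L T) (T ∘L adjoint T) := by
  ext z; rfl

theorem blockDiagonal_one_sub {E F : Type*} [NormedAddCommGroup E] [InnerProductSpace ℂ E]
    [NormedAddCommGroup F] [InnerProductSpace ℂ F] (P : E →L[ℂ] E) (Q : F →L[ℂ] F) :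
    blockDiagonal (1 - P) (1 - Q) = 1 - blockDiagonal P Q := by
  ext z; rfl

theorem normalized_operator_blocks_general
    (D : H₁ →L[ℂ] H₂) (P : H₁ →L[ℂ] H₁) (Q : H₂ →L[ℂ] H₂) (S : H₁ →L[ℂ] H₁)
    (hP₁ : ∀ x : H₁, P x ∈ LinearMap.ker (D : H₁ →ₗ[ℂ] H₂))
    (hP₂ : ∀ x ∈ LinearMap.ker (D : H₁ →ₗ[ℂ] H₂), P x = x)
    (hPsa : IsSelfAdjoint P)
    (hQ₁ : ∀ y : H₂, Q y ∈ LinearMap.ker (ContinuousLinearMap.adjoint D : H₂ →ₗ[ℂ] H₁))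
    (hQ₂ : ∀ y ∈ LinearMap.ker (ContinuousLinearMap.adjoint D : H₂ →ₗ[ℂ] H₁), Q y = y)
    (hQsa : IsSelfAdjoint Q)
    (hSpos : S.IsPositive)
    (hS : (S ∘L S) ∘L (P + (ContinuousLinearMap.adjoint D) ∘L D) = 1 ∧
          (P + (ContinuousLinearMap.adjoint D) ∘L D) ∘L (S ∘L S) = 1) :
    (ContinuousLinearMap.adjoint (D ∘L S)) ∘L (D ∘L S) = 1 - P ∧
    (D ∘L S) ∘L (ContinuousLinearMap.adjoint (D ∘L S)) = 1 - Q ∧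
    IsSelfAdjoint (blockOffDiagonal (D ∘L S)) ∧
    (blockOffDiagonal (D ∘L S)) ∘L (blockOffDiagonal (D ∘L S)) = 1 - blockDiagonal P Q := by
  obtain ⟨hSA, hAS⟩ := hS
  have hSsa : IsSelfAdjoint S := hSpos.isSelfAdjoint
  have hAP : (P + adjoint D ∘L D) * P = P := by
    ext x
    simp [show D (P x) = 0 from hP₁ x, hP₂ _ (hP₁ x)]
  have hSP : S * P = P := hSpos.mul_eq_self_of_mul_mul_eq_self <|
    calc S * S * P = S * S * (P + adjoint D ∘L D) * P := by rw [mul_assoc (S * S), hAP]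
      _ = P := by rw [show S * S * (P + adjoint D ∘L D) = 1 from hSA, one_mul]
  have hPS : P * S = P := by
    simpa only [star_mul, hSsa.star_eq, hPsa.star_eq] using congrArg star hSP
  have hQD : Q ∘L D = 0 := by
    simpa only [adjoint_adjoint] using comp_adjoint_eq_zero_of_apply_mem_ker hQsa hQ₁
  have h₁ := adjoint_comp_self_eq_one_sub hSsa hSP hPS hSA hAS
  have h₂ := self_comp_adjoint_eq_one_sub hSsa hPS hAS
    (comp_adjoint_eq_zero_of_apply_mem_ker hPsa hP₁) hQD hQ₂
  refine ⟨h₁, h₂, isSelfAdjoint_blockOffDiagonal _, ?_⟩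
  rw [blockOffDiagonal_comp_self, h₁, h₂, blockDiagonal_one_sub]

/-- Let `D : H₁ → H₂` be bounded, `P` the orthogonal projection onto
`ker D`, `Q` the orthogonal projection onto `ker D*`, `A := P + D*D` invertible, and `S` a
positive bounded self-adjoint operator with `S² = A⁻¹`.  Then `(DS)*(DS) = 1 − P` and
`(DS)(DS)* = 1 − Q`, and consequently the block operator `𝒟` with zero diagonal blocks,
upper-right block `(DS)*` and lower-left block `DS` is self-adjoint and satisfies
`𝒟² = 1 − (P ⊕ Q)`. -/
theorem normalized_operator_blocks
    (D : H₁ →L[ℂ] H₂) (P : H₁ →L[ℂ] H₁) (Q : H₂ →L[ℂ] H₂) (S : H₁ →L[ℂ] H₁)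
    (hP₁ : ∀ x : H₁, P x ∈ LinearMap.ker (D : H₁ →ₗ[ℂ] H₂))
    (hP₂ : ∀ x ∈ LinearMap.ker (D : H₁ →ₗ[ℂ] H₂), P x = x)
    (hPsa : IsSelfAdjoint P)
    (hQ₁ : ∀ y : H₂, Q y ∈ LinearMap.ker (ContinuousLinearMap.adjoint D : H₂ →ₗ[ℂ] H₁))
    (hQ₂ : ∀ y ∈ LinearMap.ker (ContinuousLinearMap.adjoint D : H₂ →ₗ[ℂ] H₁), Q y = y)
    (hQsa : IsSelfAdjoint Q)
    (hA : IsUnit (P + (ContinuousLinearMap.adjoint D) ∘L D))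
    (hSpos : S.IsPositive)
    (hS : (S ∘L S) ∘L (P + (ContinuousLinearMap.adjoint D) ∘L D) = 1 ∧
          (P + (ContinuousLinearMap.adjoint D) ∘L D) ∘L (S ∘L S) = 1) :
    (ContinuousLinearMap.adjoint (D ∘L S)) ∘L (D ∘L S) = 1 - P ∧
    (D ∘L S) ∘L (ContinuousLinearMap.adjoint (D ∘L S)) = 1 - Q ∧
    IsSelfAdjoint (blockOffDiagonal (D ∘L S)) ∧
    (blockOffDiagonal (D ∘L S)) ∘L (blockOffDiagonal (D ∘L S)) = 1 - blockDiagonal P Q :=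
  normalized_operator_blocks_general D P Q S hP₁ hP₂ hPsa hQ₁ hQ₂ hQsa hSpos hS
end
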